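/- arXiv:1410.1036 — 2 statements merged into one kernel-verified Lean document; each statement's English description precedes it below -/
import Mathlib

section
/- For points p ≠ q in 𝔹_d, the Klein bisector {x ∈ 𝔹_d : d^K(x,p) = d^K(x,q)} equals the intersection of 𝔹_d with an affine hyperplane, namely {x : ⟨x, p/√(1-⟨p,p⟩) - q/√(1-⟨q,q⟩)⟩ = 1/√(1-⟨p,p⟩) - 1/√(1-⟨q,q⟩)}. -/
/-!
Multiplying `d^K(x, p)` by the positive factor `√(1 - ⟪x, x⟫)`, which does not depend on `p`, leaves
`(1 - ⟪x, p⟫) / √(1 - ⟪p, p⟫)`, an affine function of `x`. So `d^K(x, p) = d^K(x, q)` is the equality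
of two affine functions of `x`, i.e. a hyperplane equation.
-/

open scoped RealInnerProductSpace

section

variable {E : Type*} [NormedAddCommGroup E] [InnerProductSpace ℝ E]

/-- The paper's `d^K(x, p)`: the hyperbolic cosine of the distance from `x` to `p` in the Klein
model of the unit ball. -/
noncomputable def kleinCosh (x p : E) : ℝ :=
  (1 - ⟪x, p⟫) / (√(1 - ⟪x, x⟫) * √(1 - ⟪p, p⟫))

theorem sqrt_mul_kleinCosh {x : E} (hx : ⟪x, x⟫ < 1) (p : E) :
    √(1 - ⟪x, x⟫) * kleinCosh x p = (√(1 - ⟪p, p⟫))⁻¹ - ⟪x, (√(1 - ⟪p, p⟫))⁻¹ • p⟫ := by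
  have hx' : √(1 - ⟪x, x⟫) ≠ 0 := (Real.sqrt_pos.2 (by linarith)).ne'
  rw [kleinCosh, mul_div_assoc', mul_div_mul_left _ _ hx', real_inner_smul_right]
  ring

theorem kleinCosh_eq_kleinCosh_iff {x : E} (hx : ⟪x, x⟫ < 1) (p q : E) :
    kleinCosh x p = kleinCosh x q ↔
      ⟪x, (√(1 - ⟪p, p⟫))⁻¹ • p - (√(1 - ⟪q, q⟫))⁻¹ • q⟫ =
        (√(1 - ⟪p, p⟫))⁻¹ - (√(1 - ⟪q, q⟫))⁻¹ := by
  have hx' : √(1 - ⟪x, x⟫) ≠ 0 := (Real.sqrt_pos.2 (by linarith)).ne'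
  rw [← (mul_right_injective₀ hx').eq_iff, sqrt_mul_kleinCosh hx, sqrt_mul_kleinCosh hx,
    inner_sub_right]
  constructor <;> intro h <;> linarith

end

theorem klein_bisector_affine_general (d : ℕ) (p q : EuclideanSpace ℝ (Fin d)) :
    {x : EuclideanSpace ℝ (Fin d) | ⟪x, x⟫ < 1 ∧
        (1 - ⟪x, p⟫) / (Real.sqrt (1 - ⟪x, x⟫) * Real.sqrt (1 - ⟪p, p⟫)) =
          (1 - ⟪x, q⟫) / (Real.sqrt (1 - ⟪x, x⟫) * Real.sqrt (1 - ⟪q, q⟫))} =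
      {x : EuclideanSpace ℝ (Fin d) | ⟪x, x⟫ < 1} ∩
        {x : EuclideanSpace ℝ (Fin d) |
          ⟪x, (Real.sqrt (1 - ⟪p, p⟫))⁻¹ • p - (Real.sqrt (1 - ⟪q, q⟫))⁻¹ • q⟫ =
            (Real.sqrt (1 - ⟪p, p⟫))⁻¹ - (Real.sqrt (1 - ⟪q, q⟫))⁻¹} := by
  ext x
  exact and_congr_right fun hx => kleinCosh_eq_kleinCosh_iff hx p q

theorem klein_bisector_affine (d : ℕ) (p q : EuclideanSpace ℝ (Fin d))
    (hp : ⟪p, p⟫ < 1) (hq : ⟪q, q⟫ < 1) (hpq : p ≠ q) :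
    {x : EuclideanSpace ℝ (Fin d) | ⟪x, x⟫ < 1 ∧
        (1 - ⟪x, p⟫) / (Real.sqrt (1 - ⟪x, x⟫) * Real.sqrt (1 - ⟪p, p⟫)) =
          (1 - ⟪x, q⟫) / (Real.sqrt (1 - ⟪x, x⟫) * Real.sqrt (1 - ⟪q, q⟫))} =
      {x : EuclideanSpace ℝ (Fin d) | ⟪x, x⟫ < 1} ∩
        {x : EuclideanSpace ℝ (Fin d) |
          ⟪x, (Real.sqrt (1 - ⟪p, p⟫))⁻¹ • p - (Real.sqrt (1 - ⟪q, q⟫))⁻¹ • q⟫ =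
            (Real.sqrt (1 - ⟪p, p⟫))⁻¹ - (Real.sqrt (1 - ⟪q, q⟫))⁻¹} :=
  klein_bisector_affine_general d p q
end

section
/- Fix distinct points p, q ∈ 𝔹_d. The halfspace {x ∈ 𝔹_d : d^K(x,p) ≤ d^K(x,q)} is convex (as a subset of ℝ^d): it is the intersection of the convex ball 𝔹_d with the affine halfspace {x : ⟨x, p/√(1-⟨p,p⟩) - q/√(1-⟨q,q⟩)⟩ ≥ 1/√(1-⟨p,p⟩) - 1/√(1-⟨q,q⟩)}. Hence every Klein Voronoi cell (finite intersection of such sets) is convex. -/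
/-!
Clearing the common positive factor `√(1 - ⟪x, x⟫)` from the two Klein distances turns
`d^K(x, p) ≤ d^K(x, q)` into an inequality that is affine in `x`. The halfspace is therefore
the open unit ball cut by an affine halfspace, and both are convex.
-/

open scoped RealInnerProductSpace

theorem one_sub_div_mul_le_one_sub_div_mul_iff {a b s A B : ℝ} (ha : 0 < a) (hb : 0 < b)
    (hs : 0 < s) :
    (1 - A) / (s * a) ≤ (1 - B) / (s * b) ↔ a⁻¹ - b⁻¹ ≤ a⁻¹ * A - b⁻¹ * B := by
  rw [div_le_div_iff₀ (by positivity) (by positivity), ← sub_nonneg,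
    show (1 - B) * (s * a) - (1 - A) * (s * b)
      = ((a⁻¹ * A - b⁻¹ * B) - (a⁻¹ - b⁻¹)) * (s * a * b) by field_simp; ring,
    mul_nonneg_iff_of_pos_right (by positivity), sub_nonneg]

section Klein

variable {E : Type*} [NormedAddCommGroup E] [InnerProductSpace ℝ E]

theorem setOf_inner_self_lt_one_eq_ball : {x : E | ⟪x, x⟫ < 1} = Metric.ball 0 1 := by
  ext x
  simp

theorem convex_setOf_le_inner (v : E) (r : ℝ) : Convex ℝ {x : E | r ≤ ⟪x, v⟫} :=
  convex_halfSpace_ge ((innerₛₗ ℝ).flip v).isLinear r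

/-- The distance-like function `d^K` of the Klein model; the hyperbolic distance is its `arcosh`. -/
noncomputable def kleinDist (x p : E) : ℝ :=
  (1 - ⟪x, p⟫) / (Real.sqrt (1 - ⟪x, x⟫) * Real.sqrt (1 - ⟪p, p⟫))

theorem kleinDist_le_kleinDist_iff {x p q : E} (hx : ⟪x, x⟫ < 1) (hp : ⟪p, p⟫ < 1)
    (hq : ⟪q, q⟫ < 1) :
    kleinDist x p ≤ kleinDist x q ↔
      (Real.sqrt (1 - ⟪p, p⟫))⁻¹ - (Real.sqrt (1 - ⟪q, q⟫))⁻¹ ≤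
        ⟪x, (Real.sqrt (1 - ⟪p, p⟫))⁻¹ • p - (Real.sqrt (1 - ⟪q, q⟫))⁻¹ • q⟫ := by
  rw [inner_sub_right, real_inner_smul_right, real_inner_smul_right]
  exact one_sub_div_mul_le_one_sub_div_mul_iff (Real.sqrt_pos.2 (by linarith))
    (Real.sqrt_pos.2 (by linarith)) (Real.sqrt_pos.2 (by linarith))

theorem setOf_kleinDist_le_eq {p q : E} (hp : ⟪p, p⟫ < 1) (hq : ⟪q, q⟫ < 1) :
    {x : E | ⟪x, x⟫ < 1 ∧ kleinDist x p ≤ kleinDist x q} =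
      {x : E | ⟪x, x⟫ < 1} ∩
        {x : E | (Real.sqrt (1 - ⟪p, p⟫))⁻¹ - (Real.sqrt (1 - ⟪q, q⟫))⁻¹ ≤
          ⟪x, (Real.sqrt (1 - ⟪p, p⟫))⁻¹ • p - (Real.sqrt (1 - ⟪q, q⟫))⁻¹ • q⟫} := by
  ext x
  exact and_congr_right fun hx => kleinDist_le_kleinDist_iff hx hp hq

end Klein

theorem klein_halfspace_convex_general (d : ℕ) (p q : EuclideanSpace ℝ (Fin d))
    (hp : ⟪p, p⟫ < 1) (hq : ⟪q, q⟫ < 1) :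
    ({x : EuclideanSpace ℝ (Fin d) | ⟪x, x⟫ < 1 ∧
        (1 - ⟪x, p⟫) / (Real.sqrt (1 - ⟪x, x⟫) * Real.sqrt (1 - ⟪p, p⟫)) ≤
          (1 - ⟪x, q⟫) / (Real.sqrt (1 - ⟪x, x⟫) * Real.sqrt (1 - ⟪q, q⟫))} =
      {x : EuclideanSpace ℝ (Fin d) | ⟪x, x⟫ < 1} ∩
        {x : EuclideanSpace ℝ (Fin d) |
          (Real.sqrt (1 - ⟪p, p⟫))⁻¹ - (Real.sqrt (1 - ⟪q, q⟫))⁻¹ ≤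
            ⟪x, (Real.sqrt (1 - ⟪p, p⟫))⁻¹ • p - (Real.sqrt (1 - ⟪q, q⟫))⁻¹ • q⟫}) ∧
    Convex ℝ {x : EuclideanSpace ℝ (Fin d) | ⟪x, x⟫ < 1 ∧
        (1 - ⟪x, p⟫) / (Real.sqrt (1 - ⟪x, x⟫) * Real.sqrt (1 - ⟪p, p⟫)) ≤
          (1 - ⟪x, q⟫) / (Real.sqrt (1 - ⟪x, x⟫) * Real.sqrt (1 - ⟪q, q⟫))} := by
  have hcell := setOf_kleinDist_le_eq hp hq
  refine ⟨hcell, ?_⟩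
  change Convex ℝ {x | ⟪x, x⟫ < 1 ∧ kleinDist x p ≤ kleinDist x q}
  rw [hcell, setOf_inner_self_lt_one_eq_ball]
  exact (convex_ball 0 1).inter (convex_setOf_le_inner _ _)

theorem klein_halfspace_convex (d : ℕ) (p q : EuclideanSpace ℝ (Fin d))
    (hp : ⟪p, p⟫ < 1) (hq : ⟪q, q⟫ < 1) (hpq : p ≠ q) :
    ({x : EuclideanSpace ℝ (Fin d) | ⟪x, x⟫ < 1 ∧
        (1 - ⟪x, p⟫) / (Real.sqrt (1 - ⟪x, x⟫) * Real.sqrt (1 - ⟪p, p⟫)) ≤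
          (1 - ⟪x, q⟫) / (Real.sqrt (1 - ⟪x, x⟫) * Real.sqrt (1 - ⟪q, q⟫))} =
      {x : EuclideanSpace ℝ (Fin d) | ⟪x, x⟫ < 1} ∩
        {x : EuclideanSpace ℝ (Fin d) |
          (Real.sqrt (1 - ⟪p, p⟫))⁻¹ - (Real.sqrt (1 - ⟪q, q⟫))⁻¹ ≤
            ⟪x, (Real.sqrt (1 - ⟪p, p⟫))⁻¹ • p - (Real.sqrt (1 - ⟪q, q⟫))⁻¹ • q⟫}) ∧
    Convex ℝ {x : EuclideanSpace ℝ (Fin d) | ⟪x, x⟫ < 1 ∧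
        (1 - ⟪x, p⟫) / (Real.sqrt (1 - ⟪x, x⟫) * Real.sqrt (1 - ⟪p, p⟫)) ≤
          (1 - ⟪x, q⟫) / (Real.sqrt (1 - ⟪x, x⟫) * Real.sqrt (1 - ⟪q, q⟫))} :=
  klein_halfspace_convex_general d p q hp hq
end
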